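/- arXiv:1209.3417 — 3 statements merged into one kernel-verified Lean document; each statement's English description precedes it below -/
import Mathlib

section
/- Let R be a commutative Noetherian ring and M an R-module. Then Att_R(M) = Att_R(M^∨∨), where (-)^∨ = Hom_R(-, ⊕_{m ∈ Max R} E(R/m)). -/
open CategoryTheory

universe u

/-- The set of attached primes of `M`: primes `p` with `p = Ann_R(L)` for some quotient `L` of `M`. -/
def Module.Att (R : Type u) [CommRing R] (M : Type u) [AddCommGroup M] [Module R M] :
    Set (Ideal R) :=
  {p | p.IsPrime ∧ ∃ N : Submodule R M, p = Module.annihilator R (M ⧸ N)}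

/-- `IsInjectiveHull R A E f` says that `f : A →ₗ[R] E` realizes `E` as an injective hull of `A`:
`f` is injective, `E` is an injective `R`-module, and the image of `f` is an essential
submodule of `E`. -/
def IsInjectiveHull (R : Type u) [CommRing R] (A : Type u) (E : Type u) [AddCommGroup A]
    [Module R A] [AddCommGroup E] [Module R E] (f : A →ₗ[R] E) : Prop :=
  Function.Injective f ∧ Module.Injective R E ∧
    ∀ N : Submodule R E, N ≠ ⊥ → N ⊓ LinearMap.range f ≠ ⊥

/-! An attached prime of `X` is a prime `p` with `Ann(X/pX) = p`. Let `T = ⊕ E(R/m)`: it is a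
cogenerator, and injective because `R` is Noetherian. Both `Ann(X/pX)` and `Ann(X^∨∨/pX^∨∨)`
equal the annihilator of the `p`-torsion `(0 :_{X^∨} p)` of `X^∨`. For `X/pX` this holds because
`(X/pX)^∨ = (0 :_{X^∨} p)` and a cogenerator detects annihilators. For `K^∨/pK^∨` with `K = X^∨`,
it holds because `p` is finitely generated and `T` injective, which makes `pK^∨` exactly the maps
killing `(0 :_K p)`. -/

def Module.IsCogenerator (R : Type u) [CommRing R] (T : Type u) [AddCommGroup T] [Module R T] :
    Prop :=
  ∀ (X : Type u) [AddCommGroup X] [Module R X] (x : X), x ≠ 0 → ∃ f : X →ₗ[R] T, f x ≠ 0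

section Injective

variable {R : Type u} [CommRing R]

theorem Module.Injective.exists_comp_eq_of_ker_le {Q X Y : Type u} [AddCommGroup Q] [Module R Q]
    [AddCommGroup X] [Module R X] [AddCommGroup Y] [Module R Y] [Module.Injective R Q]
    (α : X →ₗ[R] Y) (f : X →ₗ[R] Q) (h : LinearMap.ker α ≤ LinearMap.ker f) :
    ∃ g : Y →ₗ[R] Q, g ∘ₗ α = f := by
  obtain ⟨g, hg⟩ := Module.Injective.extension_property R Q _ _ (LinearMap.range α).subtype
    (Submodule.injective_subtype _)
    ((LinearMap.ker α).liftQ f h ∘ₗ α.quotKerEquivRange.symm.toLinearMap)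
  refine ⟨g, LinearMap.ext fun x => ?_⟩
  have := LinearMap.congr_fun hg ⟨α x, LinearMap.mem_range_self α x⟩
  simpa [LinearMap.quotKerEquivRange_symm_apply_image] using this

theorem Module.injective_directSum_of_isNoetherianRing [IsNoetherianRing R] {ι : Type*}
    (E : ι → Type u) [∀ i, AddCommGroup (E i)] [∀ i, Module R (E i)]
    [∀ i, Module.Injective R (E i)] : Module.Injective R (DirectSum ι E) := by
  classical
  refine Module.Baer.injective fun I g => ?_
  obtain ⟨S, hS⟩ : (⊤ : Submodule R I).FG := Module.Finite.fg_top
  -- `I` is finitely generated, so `g` lands in the finitely many summands indexed by `F`.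
  set F : Finset ι := S.biUnion fun s => (g s).support
  have hF : ∀ y : I, ∀ i ∉ F, g y i = 0 := by
    suffices ⊤ ≤ (⨅ i ∉ F, LinearMap.ker (DirectSum.component R ι E i)).comap g from
      fun y i hi => by
        have hy := this (Submodule.mem_top (x := y))
        simp only [Submodule.mem_comap, Submodule.mem_iInf, LinearMap.mem_ker] at hy
        exact hy i hi
    rw [← hS, Submodule.span_le]
    intro s hs
    simp only [SetLike.mem_coe, Submodule.mem_comap, Submodule.mem_iInf, LinearMap.mem_ker,
      ← DirectSum.apply_eq_component]
    intro i hi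
    by_contra hne
    exact hi (Finset.mem_biUnion.2 ⟨s, hs, DFinsupp.mem_support_iff.2 hne⟩)
  choose h hh using fun i => Module.Injective.extension_property R (E i) _ _ I.subtype
    (Submodule.injective_subtype I) (DirectSum.component R ι E i ∘ₗ g)
  refine ⟨∑ i ∈ F, DirectSum.lof R ι E i ∘ₗ h i, fun x hx => ?_⟩
  refine DFinsupp.ext fun i => ?_
  have hhx : h i x = g ⟨x, hx⟩ i := LinearMap.congr_fun (hh i) ⟨x, hx⟩
  by_cases hi : i ∈ F
  · simp [DirectSum.lof_eq_of, DirectSum.of_apply, hi, hhx]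
  · simp [DirectSum.lof_eq_of, DirectSum.of_apply, hi, hF ⟨x, hx⟩ i hi]


theorem Module.isCogenerator_directSum_maximalSpectrum (E : MaximalSpectrum R → Type u)
    [∀ m, AddCommGroup (E m)] [∀ m, Module R (E m)] [∀ m, Module.Injective R (E m)]
    (e : ∀ m : MaximalSpectrum R, (R ⧸ m.asIdeal) →ₗ[R] E m) (he : ∀ m, Function.Injective (e m)) :
    Module.IsCogenerator R (DirectSum (MaximalSpectrum R) E) := by
  classical
  intro X _ _ x hx
  obtain ⟨m, hm, hle⟩ := Ideal.exists_le_maximal (LinearMap.ker (LinearMap.toSpanSingleton R X x))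
    ((Ideal.ne_top_iff_one _).2 (by simpa using hx))
  set q : R →ₗ[R] E ⟨m, hm⟩ := e ⟨m, hm⟩ ∘ₗ m.mkQ
  have hker : LinearMap.ker (LinearMap.toSpanSingleton R X x) ≤ LinearMap.ker q := fun r hr => by
    simp [q, Ideal.Quotient.eq_zero_iff_mem.2 (hle hr)]
  obtain ⟨g, hg⟩ := Module.Injective.exists_comp_eq_of_ker_le _ q hker
  refine ⟨DirectSum.lof R _ E ⟨m, hm⟩ ∘ₗ g, fun h0 => hm.ne_top ?_⟩
  have hgx : g x = q 1 := by simpa using LinearMap.congr_fun hg 1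
  simp only [LinearMap.comp_apply, hgx, q, DirectSum.lof_eq_of,
    map_eq_zero_iff _ (DirectSum.of_injective _),
    map_eq_zero_iff _ (he _), Submodule.mkQ_apply, Submodule.Quotient.mk_eq_zero] at h0
  exact (Ideal.eq_top_iff_one m).2 h0

end Injective

section Annihilator

variable {R : Type u} [CommRing R] {T : Type u} [AddCommGroup T] [Module R T]

theorem Module.mem_att_iff_annihilator_quotient_smul_top {X : Type u} [AddCommGroup X]
    [Module R X] (p : Ideal R) :
    p ∈ Module.Att R X ↔ p.IsPrime ∧ Module.annihilator R (X ⧸ p • (⊤ : Submodule R X)) = p := by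
  refine and_congr_right fun _ => ⟨fun ⟨N, hN⟩ => le_antisymm ?_ ?_, fun h => ⟨p • ⊤, h.symm⟩⟩
  · have hle : p • ⊤ ≤ N := Submodule.smul_le.2 fun a ha x _ => by
      rw [hN, Submodule.annihilator_quotient, Submodule.mem_colon] at ha
      exact ha x (Set.mem_univ x)
    calc Module.annihilator R (X ⧸ p • ⊤) ≤ Module.annihilator R (X ⧸ N) := by
          simpa only [Submodule.annihilator_quotient] using Submodule.colon_mono hle le_rfl
      _ = p := hN.symm
  · intro a ha
    rw [Submodule.annihilator_quotient, Submodule.mem_colon]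
    exact fun x _ => Submodule.smul_mem_smul ha Submodule.mem_top

theorem LinearMap.mem_torsionBySet_iff_smul_top_le_ker {X : Type u} [AddCommGroup X] [Module R X]
    (p : Ideal R) (f : X →ₗ[R] T) :
    f ∈ Submodule.torsionBySet R (X →ₗ[R] T) p ↔ p • ⊤ ≤ LinearMap.ker f := by
  rw [Submodule.mem_torsionBySet_iff, Submodule.smul_le]
  simp only [Submodule.mem_top, true_implies, LinearMap.mem_ker, map_smul, Subtype.forall,
    LinearMap.ext_iff, LinearMap.smul_apply, LinearMap.zero_apply, SetLike.mem_coe]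

theorem LinearMap.mem_smul_top_iff_torsionBySet_le_ker [Module.Injective R T] {p : Ideal R}
    (hp : p.FG) {K : Type u} [AddCommGroup K] [Module R K] (Φ : K →ₗ[R] T) :
    Φ ∈ p • (⊤ : Submodule R (K →ₗ[R] T)) ↔ Submodule.torsionBySet R K p ≤ LinearMap.ker Φ := by
  constructor
  · intro hΦ f hf
    refine Submodule.smul_induction_on hΦ (fun a ha Ψ _ => ?_) fun Ψ₁ Ψ₂ h₁ h₂ => ?_
    · simp [← map_smul, (Submodule.mem_torsionBySet_iff _ _).1 hf ⟨a, ha⟩]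
    · rw [LinearMap.mem_ker] at h₁ h₂ ⊢
      rw [LinearMap.add_apply, h₁, h₂, add_zero]
  · intro hΦ
    classical
    obtain ⟨S, rfl⟩ := hp
    -- `Φ` kills the kernel of `f ↦ (s • f)ₛ`, so it factors through it as `∑ s • Φₛ`.
    let α : K →ₗ[R] (S → K) := LinearMap.pi fun s => (s : R) • LinearMap.id
    have hker : LinearMap.ker α ≤ LinearMap.ker Φ := fun f hf => hΦ <| by
      rw [← Submodule.torsionBySet_eq_torsionBySet_span, Submodule.mem_torsionBySet_iff]
      exact fun s => by simpa [α] using congr_fun (LinearMap.mem_ker.1 hf) s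
    obtain ⟨g, rfl⟩ := Module.Injective.exists_comp_eq_of_ker_le α Φ hker
    have : g ∘ₗ α = ∑ s : S, (s : R) • (g ∘ₗ LinearMap.single R _ s) := by
      ext f
      rw [LinearMap.comp_apply, ← Finset.univ_sum_single (α f), map_sum, LinearMap.sum_apply]
      refine Finset.sum_congr rfl fun s _ => ?_
      rw [LinearMap.smul_apply, LinearMap.comp_apply, ← map_smul, LinearMap.single_apply,
        ← Pi.single_smul]
      rfl
    rw [this]
    exact Submodule.sum_mem _ fun s _ =>
      Submodule.smul_mem_smul (Ideal.subset_span s.2) Submodule.mem_top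

theorem Module.annihilator_quotient_smul_top_eq_annihilator_torsionBySet_dual
    (hT : Module.IsCogenerator R T) (X : Type u) [AddCommGroup X] [Module R X] (p : Ideal R) :
    Module.annihilator R (X ⧸ p • (⊤ : Submodule R X)) =
      (Submodule.torsionBySet R (X →ₗ[R] T) p).annihilator := by
  ext r
  simp only [Submodule.annihilator_quotient, Submodule.mem_colon, Set.mem_univ, true_implies,
    Submodule.mem_annihilator, LinearMap.mem_torsionBySet_iff_smul_top_le_ker]
  constructor
  · intro H f hf
    ext x
    simpa using hf (H x)
  · intro H x
    by_contra hx
    obtain ⟨φ, hφ⟩ := hT _ (Submodule.Quotient.mk (r • x) : X ⧸ p • (⊤ : Submodule R X))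
      (by rwa [ne_eq, Submodule.Quotient.mk_eq_zero])
    have hker : p • ⊤ ≤ LinearMap.ker (φ ∘ₗ (p • ⊤ : Submodule R X).mkQ) := by
      simpa only [Submodule.ker_mkQ] using LinearMap.ker_le_ker_comp (p • ⊤ : Submodule R X).mkQ φ
    exact hφ (by simpa using LinearMap.congr_fun (H _ hker) x)

theorem Module.annihilator_dual_quotient_smul_top_eq_annihilator_torsionBySet
    [Module.Injective R T] (hT : Module.IsCogenerator R T) {p : Ideal R} (hp : p.FG)
    (K : Type u) [AddCommGroup K] [Module R K] :
    Module.annihilator R ((K →ₗ[R] T) ⧸ p • (⊤ : Submodule R (K →ₗ[R] T))) =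
      (Submodule.torsionBySet R K p).annihilator := by
  ext r
  simp only [Submodule.annihilator_quotient, Submodule.mem_colon, Set.mem_univ, true_implies,
    Submodule.mem_annihilator, LinearMap.mem_smul_top_iff_torsionBySet_le_ker hp]
  constructor
  · intro H f hf
    by_contra hrf
    obtain ⟨Φ, hΦ⟩ := hT _ _ hrf
    exact hΦ (by simpa using H Φ hf)
  · intro H Φ f hf
    simp [← map_smul, H f hf]

end Annihilator

theorem att_eq_att_double_dual (R : Type u) [CommRing R] [IsNoetherianRing R]
    (E : MaximalSpectrum R → Type u) [∀ m, AddCommGroup (E m)] [∀ m, Module R (E m)]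
    (e : ∀ m : MaximalSpectrum R, (R ⧸ m.asIdeal) →ₗ[R] E m)
    (he : ∀ m : MaximalSpectrum R, IsInjectiveHull R (R ⧸ m.asIdeal) (E m) (e m))
    (M : Type u) [AddCommGroup M] [Module R M] :
    Module.Att R M = Module.Att R ((M →ₗ[R] DirectSum (MaximalSpectrum R) E) →ₗ[R] DirectSum (MaximalSpectrum R) E) := by
  have : ∀ m, Module.Injective R (E m) := fun m => (he m).2.1
  have hT := Module.isCogenerator_directSum_maximalSpectrum E e fun m => (he m).1
  have := Module.injective_directSum_of_isNoetherianRing (R := R) E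
  ext p
  rw [Module.mem_att_iff_annihilator_quotient_smul_top,
    Module.mem_att_iff_annihilator_quotient_smul_top,
    Module.annihilator_dual_quotient_smul_top_eq_annihilator_torsionBySet hT
      (IsNoetherian.noetherian p),
    Module.annihilator_quotient_smul_top_eq_annihilator_torsionBySet_dual hT]
end

section
/- Let (R, m) be a Noetherian local ring, p a non-maximal prime ideal, and M = R/p. Then Coass_R(M) = {m} while Att_R(M) = V(p); in particular, the inclusion Coass_R(M) ⊆ Att_R(M) is strict. -/
open CategoryTheory

universe u

/-- The set of coassociated primes of `M`: primes `p` with `p = Ann_R(L)` for some Artinian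
quotient `L` of `M`. -/
def Module.Coass (R : Type u) [CommRing R] (M : Type u) [AddCommGroup M] [Module R M] :
    Set (Ideal R) :=
  {p | p.IsPrime ∧ ∃ N : Submodule R M, IsArtinian R (M ⧸ N) ∧ p = Module.annihilator R (M ⧸ N)}

/-! Every quotient of `R ⧸ I` is of the form `R ⧸ J` with `I ≤ J`, and its annihilator is `J`.
So the attached primes of `R ⧸ I` are the primes containing `I`, while the coassociated ones
are the primes `J ⊇ I` with `R ⧸ J` Artinian, i.e. (an Artinian domain being a field) the
maximal ideals containing `I`. In a local ring that leaves only the maximal ideal. -/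

namespace Ideal

variable {R : Type u} [CommRing R]

theorem isArtinian_quotient_iff_isMaximal (q : Ideal R) [q.IsPrime] :
    IsArtinian R (R ⧸ q) ↔ q.IsMaximal := by
  refine ⟨fun h ↦ ?_, fun h ↦ ?_⟩
  · have : IsArtinianRing (R ⧸ q) := isArtinian_of_tower R h
    exact Quotient.maximal_of_isField q (IsArtinianRing.isField_of_isDomain _)
  · have : IsSimpleModule R (R ⧸ q) := (isSimpleModule_iff_isCoatom (m := q)).mpr h.out
    infer_instance

theorem exists_quotient_quotient_equiv (I : Ideal R) (N : Submodule R (R ⧸ I)) :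
    ∃ J : Ideal R, I ≤ J ∧ Nonempty (((R ⧸ I) ⧸ N) ≃ₗ[R] R ⧸ J) := by
  set J : Ideal R := N.comap I.mkQ
  have hIJ : I ≤ J := (Submodule.ker_mkQ I).symm.le.trans (LinearMap.ker_le_comap _)
  have hN : N = Submodule.map I.mkQ J :=
    (Submodule.map_comap_eq_of_surjective I.mkQ_surjective N).symm
  exact ⟨J, hIJ, ⟨(Submodule.quotEquivOfEq _ _ hN).trans
    (Submodule.quotientQuotientEquivQuotient I J hIJ)⟩⟩

end Ideal

namespace Module

variable {R : Type u} [CommRing R]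

theorem att_quotient (I : Ideal R) : Att R (R ⧸ I) = {q | q.IsPrime ∧ I ≤ q} := by
  ext q
  constructor
  · rintro ⟨hq, N, rfl⟩
    obtain ⟨J, hIJ, ⟨e⟩⟩ := I.exists_quotient_quotient_equiv N
    rw [e.annihilator_eq, J.annihilator_quotient] at hq ⊢
    exact ⟨hq, hIJ⟩
  · rintro ⟨hq, hIq⟩
    refine ⟨hq, Submodule.map I.mkQ q, ?_⟩
    rw [(Submodule.quotientQuotientEquivQuotient I q hIq).annihilator_eq, q.annihilator_quotient]

theorem coass_quotient (I : Ideal R) : Coass R (R ⧸ I) = {q | q.IsMaximal ∧ I ≤ q} := by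
  ext q
  constructor
  · rintro ⟨hq, N, hArt, rfl⟩
    obtain ⟨J, hIJ, ⟨e⟩⟩ := I.exists_quotient_quotient_equiv N
    rw [e.annihilator_eq, J.annihilator_quotient] at hq ⊢
    exact ⟨J.isArtinian_quotient_iff_isMaximal.mp (isArtinian_of_linearEquiv e), hIJ⟩
  · rintro ⟨hq, hIq⟩
    let e := Submodule.quotientQuotientEquivQuotient I q hIq
    refine ⟨hq.isPrime, Submodule.map I.mkQ q, ?_, ?_⟩
    · have := hq.isPrime
      have := q.isArtinian_quotient_iff_isMaximal.mpr hq
      exact isArtinian_of_linearEquiv e.symm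
    · rw [e.annihilator_eq, q.annihilator_quotient]

end Module

theorem coass_att_quotient_prime_general (R : Type u) [CommRing R]
    [IsLocalRing R] (p : Ideal R) (hp : p.IsPrime)
    (hpm : p ≠ IsLocalRing.maximalIdeal R) :
    Module.Coass R (R ⧸ p) = {IsLocalRing.maximalIdeal R} ∧
      Module.Att R (R ⧸ p) = {q : Ideal R | q.IsPrime ∧ p ≤ q} ∧
      Module.Coass R (R ⧸ p) ⊂ Module.Att R (R ⧸ p) := by
  have hp_le : p ≤ IsLocalRing.maximalIdeal R := IsLocalRing.le_maximalIdeal hp.ne_top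
  have hCoass : Module.Coass R (R ⧸ p) = {IsLocalRing.maximalIdeal R} := by
    rw [Module.coass_quotient]
    ext q
    exact ⟨fun h ↦ IsLocalRing.eq_maximalIdeal h.1,
      by rintro rfl; exact ⟨inferInstance, hp_le⟩⟩
  refine ⟨hCoass, Module.att_quotient p, ?_⟩
  rw [hCoass, Module.att_quotient]
  exact ssubset_of_subset_not_subset (Set.singleton_subset_iff.mpr ⟨inferInstance, hp_le⟩)
    fun h ↦ hpm (h ⟨hp, le_rfl⟩)

theorem coass_att_quotient_prime (R : Type u) [CommRing R] [IsNoetherianRing R]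
    [IsLocalRing R] (p : Ideal R) (hp : p.IsPrime)
    (hpm : p ≠ IsLocalRing.maximalIdeal R) :
    Module.Coass R (R ⧸ p) = {IsLocalRing.maximalIdeal R} ∧
      Module.Att R (R ⧸ p) = {q : Ideal R | q.IsPrime ∧ p ≤ q} ∧
      Module.Coass R (R ⧸ p) ⊂ Module.Att R (R ⧸ p) :=
  coass_att_quotient_prime_general R p hp hpm
end

section
/- Let (R, m) be a Noetherian local ring and M = ⊕_{i ∈ ℕ} R/m a countably infinite direct sum of copies of the residue field. Then Coass_R(M) = {m}, so mag_R(M) = 0, while Ndim_R(M) > 0. -/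
open CategoryTheory

universe u

/-- The magnitude of a module: `sup { dim R/p : p ∈ Coass_R M }`, with value `⊥ = -∞` for `M = 0`. -/
noncomputable def Module.mag (R : Type u) [CommRing R] (M : Type u) [AddCommGroup M]
    [Module R M] : WithBot ℕ∞ :=
  ⨆ p ∈ Module.Coass R M, ringKrullDim (R ⧸ p)

/-- `NdimLE R d M` means the Noetherian dimension of `M` is at most `d - 1`; so
`NdimLE R 0 M` means `M = 0`, and `NdimLE R (d+1) M` means every ascending chain of submodules
of `M` eventually has successive quotients of Noetherian dimension at most `d - 1`. -/
def NdimLE (R : Type u) [CommRing R] :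
    ℕ → (M : Type u) → [AddCommGroup M] → [Module R M] → Prop
  | 0, M, _, _ => Subsingleton M
  | d + 1, M, _, _ => ∀ c : ℕ →o Submodule R M, ∃ n₀ : ℕ, ∀ n > n₀,
      NdimLE R d (↥(c (n + 1)) ⧸ Submodule.comap (c (n + 1)).subtype (c n))

open Classical in
/-- The Noetherian dimension of `M`, as an element of `WithBot ℕ∞`:
`⊥ = -1` iff `M = 0`, and otherwise it is the least natural number `d` with `NdimLE R (d+1) M`
(and `⊤` if no such `d` exists). -/
noncomputable def Ndim (R : Type u) [CommRing R] (M : Type u) [AddCommGroup M]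
    [Module R M] : WithBot ℕ∞ :=
  if Subsingleton M then ⊥
  else sInf {e : WithBot ℕ∞ | ∃ d : ℕ, e = (d : ℕ∞) ∧ NdimLE R (d + 1) M}
/-!
A direct sum of copies of a simple module `L` has the same annihilator as `L`, a maximal ideal.
Annihilators only grow under passing to quotients, so this maximal ideal is the only possible
coassociated prime, and projecting onto one summand exhibits `L` itself as an Artinian quotient.
So the only coassociated prime is `m`, and `dim R/m = 0`.
On the other hand the submodules supported on `[0, n)` form a strictly increasing chain, so
`M` is not Noetherian and its Noetherian dimension is positive.
-/

namespace Module

variable {R : Type u} [CommRing R] {M L : Type u} [AddCommGroup M] [Module R M]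
  [AddCommGroup L] [Module R L]

theorem annihilator_le_of_mem_coass {p : Ideal R} (hp : p ∈ Coass R M) :
    annihilator R M ≤ p := by
  obtain ⟨-, N, -, rfl⟩ := hp
  exact N.mkQ.annihilator_le_of_surjective N.mkQ_surjective

theorem coass_subset_of_isMaximal (h : (annihilator R M).IsMaximal) :
    Coass R M ⊆ {annihilator R M} := fun _ hp =>
  (h.eq_of_le hp.1.ne_top (annihilator_le_of_mem_coass hp)).symm

theorem annihilator_mem_coass_of_surjective [IsArtinian R L] (hL : (annihilator R L).IsPrime)
    (f : M →ₗ[R] L) (hf : Function.Surjective f) : annihilator R L ∈ Coass R M := by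
  let e := f.quotKerEquivOfSurjective hf
  exact ⟨hL, LinearMap.ker f, e.symm.isArtinian_iff.mp ‹_›, e.annihilator_eq.symm⟩

theorem coass_finsupp_of_isSimpleModule {ι : Type} [Nonempty ι] [IsSimpleModule R L] :
    Coass R (ι →₀ L) = {annihilator R L} := by
  have hL := IsSimpleModule.annihilator_isMaximal (R := R) (M := L)
  refine subset_antisymm ?_ ?_
  · rw [← annihilator_finsupp (ι := ι)] at hL ⊢
    exact coass_subset_of_isMaximal hL
  · obtain ⟨i⟩ := ‹Nonempty ι›
    rw [Set.singleton_subset_iff]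
    exact annihilator_mem_coass_of_surjective hL.isPrime (Finsupp.lapply i)
      fun x => ⟨Finsupp.single i x, by simp⟩

theorem mag_eq_zero_of_coass_eq_singleton {m : Ideal R} [m.IsMaximal] (h : Coass R M = {m}) :
    mag R M = 0 := by
  rw [mag, h, iSup_singleton]
  exact ringKrullDim_eq_zero_of_isField
    ((Ideal.Quotient.maximal_ideal_iff_isField_quotient m).mp ‹_›)

end Module

section Ndim

variable {R : Type u} [CommRing R] {M : Type u} [AddCommGroup M] [Module R M]

theorem ndimLE_one_of_subsingleton [Subsingleton M] : NdimLE R 1 M :=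
  fun _ => ⟨0, fun _ _ => inferInstanceAs (Subsingleton (Quotient _))⟩

theorem ndim_pos_of_not_ndimLE_one (h : ¬ NdimLE R 1 M) : 0 < Ndim R M := by
  have : ¬ Subsingleton M := fun _ => h ndimLE_one_of_subsingleton
  rw [Ndim, if_neg this]
  refine lt_of_lt_of_le (by norm_num : (0 : WithBot ℕ∞) < 1) (le_sInf ?_)
  rintro _ ⟨d, rfl, hd⟩
  rcases d with _ | d
  · exact absurd hd h
  · exact_mod_cast Nat.succ_pos d

theorem not_ndimLE_one_finsupp (k : Type u) [AddCommGroup k] [Module R k] [Nontrivial k] :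
    ¬ NdimLE R 1 (ℕ →₀ k) := by
  intro h
  obtain ⟨x, hx⟩ := exists_ne (0 : k)
  obtain ⟨n₀, hn₀⟩ := h ⟨fun n => Finsupp.supported k R (Set.Iio n),
    fun _ _ hmn => Finsupp.supported_mono (Set.Iio_subset_Iio hmn)⟩
  set n := n₀ + 1
  have hmem : Finsupp.single n x ∈ Finsupp.supported k R (Set.Iio (n + 1)) :=
    Finsupp.single_mem_supported R x n.lt_succ_self
  have hnmem : Finsupp.single n x ∉ Finsupp.supported k R (Set.Iio n) := fun hsupp =>
    hx (by simpa using (Finsupp.mem_supported' R _).mp hsupp n (lt_irrefl n))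
  have hzero := (hn₀ n n₀.lt_succ_self).elim (Submodule.Quotient.mk ⟨_, hmem⟩) 0
  exact hnmem (Submodule.mem_comap.mp ((Submodule.Quotient.mk_eq_zero _).mp hzero))

end Ndim

theorem mag_lt_ndim_example_general (R : Type u) [CommRing R] [IsLocalRing R] :
    Module.Coass R (ℕ →₀ (R ⧸ IsLocalRing.maximalIdeal R)) = {IsLocalRing.maximalIdeal R} ∧
      Module.mag R (ℕ →₀ (R ⧸ IsLocalRing.maximalIdeal R)) = 0 ∧
      0 < Ndim R (ℕ →₀ (R ⧸ IsLocalRing.maximalIdeal R)) := by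
  have : IsSimpleModule R (R ⧸ IsLocalRing.maximalIdeal R) :=
    isSimpleModule_iff_isCoatom.mpr (IsLocalRing.maximalIdeal.isMaximal R).out
  have hcoass : Module.Coass R (ℕ →₀ (R ⧸ IsLocalRing.maximalIdeal R)) =
      {IsLocalRing.maximalIdeal R} := by
    rw [Module.coass_finsupp_of_isSimpleModule, Ideal.annihilator_quotient]
  exact ⟨hcoass, Module.mag_eq_zero_of_coass_eq_singleton hcoass,
    ndim_pos_of_not_ndimLE_one (not_ndimLE_one_finsupp _)⟩

theorem mag_lt_ndim_example (R : Type u) [CommRing R] [IsNoetherianRing R] [IsLocalRing R] :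
    Module.Coass R (ℕ →₀ (R ⧸ IsLocalRing.maximalIdeal R)) = {IsLocalRing.maximalIdeal R} ∧
      Module.mag R (ℕ →₀ (R ⧸ IsLocalRing.maximalIdeal R)) = 0 ∧
      0 < Ndim R (ℕ →₀ (R ⧸ IsLocalRing.maximalIdeal R)) :=
  mag_lt_ndim_example_general R
end
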